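/- Let 0 < δ ≤ 0.0005 and suppose the pair of real polynomials (P_{−1}, P₀) has a (δ, 2)-regular ρ-germ at x₀ ∈ ℝ (for some renormalization factor ρ > 0). Then there exist real numbers y⁻_{−1} < y⁻₀ < x₀ < y⁺₀ < y⁺_{−1} such that for k ∈ {−1, 0}: P_k(y⁻_k) = P_k(y⁺_k) = 0, and P_k(x) > 0 for all x ∈ (y⁻_k, x₀] ∪ [x₀, y⁺_k). Moreover the interval length ratios satisfy (y⁺_{−1} − x₀)/(y⁺₀ − x₀) ≤ 2.1 and (x₀ − y⁻_{−1})/(x₀ − y⁻₀) ≤ 2.1. -/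

import Mathlib

open Polynomial

/-- The Thue–Morse iteration of a polynomial pair; `tmSeq Pm1 P0 (k+1)` is `P_k`,
so `tmSeq Pm1 P0 0 = P_{-1}` and `tmSeq Pm1 P0 1 = P₀`. -/
noncomputable def tmSeq (Pm1 P0 : Polynomial ℝ) : ℕ → Polynomial ℝ
  | 0 => Pm1
  | 1 => P0
  | (n + 2) => (tmSeq Pm1 P0 n) ^ 2 * (tmSeq Pm1 P0 (n + 1) - 2) + 2

/-- `tmDelta Pm1 P0 x₀ ρ (k+1) = Δ_k`, where
`Δ_k x = Q_k x - 2 cos x` and `Q_k x = P_k (x / (2 ^ k ρ) + x₀)`. -/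
noncomputable def tmDelta (Pm1 P0 : Polynomial ℝ) (x₀ ρ : ℝ) (j : ℕ) (x : ℝ) : ℝ :=
  (tmSeq Pm1 P0 j).eval (x / ((2 : ℝ) ^ ((j : ℤ) - 1) * ρ) + x₀) - 2 * Real.cos x

/-- `tmCoeff Pm1 P0 x₀ ρ (k+1) n = Δ_{k,n}`, the `n`-th Taylor coefficient of
`Δ_k` at `0`. -/
noncomputable def tmCoeff (Pm1 P0 : Polynomial ℝ) (x₀ ρ : ℝ) (j : ℕ) (n : ℕ) : ℝ :=
  iteratedDeriv n (tmDelta Pm1 P0 x₀ ρ j) 0 / (n.factorial : ℝ)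

/-- The pair `(Pm1, P0)` has a `ρ`-germ at `x₀`. -/
def HasGermAt (Pm1 P0 : Polynomial ℝ) (ρ x₀ : ℝ) : Prop :=
  0 < ρ ∧
  Pm1.eval x₀ = 2 ∧ (derivative Pm1).eval x₀ = 0 ∧
    (derivative (derivative Pm1)).eval x₀ = -ρ ^ 2 / 2 ∧
  P0.eval x₀ = 2 ∧ (derivative P0).eval x₀ = 0 ∧
    (derivative (derivative P0)).eval x₀ = -(2 * ρ ^ 2)

/-- The pair `(Pm1, P0)` has a `(δ, β)`-regular `ρ`-germ at `x₀`:
a `ρ`-germ together with the bounds `|Δ_{-1,n}| ≤ δ / β ^ n` and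
`|Δ_{0,n}| ≤ δ / β ^ n` for all `n ≥ 3`. -/
def IsRegularGermAt (Pm1 P0 : Polynomial ℝ) (δ β ρ x₀ : ℝ) : Prop :=
  HasGermAt Pm1 P0 ρ x₀ ∧
  ∀ n : ℕ, 3 ≤ n →
    |tmCoeff Pm1 P0 x₀ ρ 0 n| ≤ δ / β ^ n ∧ |tmCoeff Pm1 P0 x₀ ρ 1 n| ≤ δ / β ^ n

/-!
Rescale by `s` (`s = ρ / 2` for `P_{-1}`, `s = ρ` for `P₀`), so that `Q(y) = P(y / s + x₀)`.
The germ conditions say that the Taylor series of `Q - 2 cos` at `0` starts in degree `3`, and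
regularity bounds its coefficients by `δ / 2ⁿ`; hence `|Q(y) - 2 cos y| ≤ δ / (1 - |y| / 2)`,
which is at most `0.0025` for `|y| ≤ 1.6`. Since `2 cos y > 0.02` for `|y| ≤ 1.55` and
`2 cos (±1.6) < -0.02`, the first zeros of `Q` on either side of `0` lie in `1.55 < |y| < 1.6`.
Back in the original variable the zeros of `P_{-1}` are at distance between `3.1 / ρ` and
`3.2 / ρ` from `x₀`, those of `P₀` between `1.55 / ρ` and `1.6 / ρ`, and `3.2 / 1.55 < 2.1`.
-/

open Polynomial Real Set Nat

namespace Polynomial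

variable {𝕜 : Type*} [NontriviallyNormedField 𝕜]

theorem contDiff_eval (p : 𝕜[X]) (n : WithTop ℕ∞) : ContDiff 𝕜 n fun x => p.eval x := by
  convert contDiff_aeval p n using 2 with x
  rw [coe_aeval_eq_eval]

theorem iteratedDeriv_eval (p : 𝕜[X]) (n : ℕ) :
    iteratedDeriv n (fun x => p.eval x) = fun x => (derivative^[n] p).eval x := by
  induction n generalizing p with
  | zero => rfl
  | succ n ih =>
    have hderiv : _root_.deriv (fun x => p.eval x) = fun x => (derivative p).eval x := by
      ext x; exact p.deriv
    rw [iteratedDeriv_succ', hderiv, ih, Function.iterate_succ_apply]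

theorem iteratedDeriv_eval_zero_div_factorial [CharZero 𝕜] (p : 𝕜[X]) (n : ℕ) :
    iteratedDeriv n (fun x => p.eval x) 0 / n ! = p.coeff n := by
  simp only [iteratedDeriv_eval, ← coeff_zero_eq_eval_zero, coeff_iterate_derivative, zero_add,
    Nat.descFactorial_self, nsmul_eq_mul]
  exact mul_div_cancel_left₀ _ (Nat.cast_ne_zero.2 n.factorial_ne_zero)

theorem iteratedDeriv_eval_mul_add (p : 𝕜[X]) (c a : 𝕜) (n : ℕ) (y : 𝕜) :
    iteratedDeriv n (fun x => p.eval (c * x + a)) y =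
      c ^ n * (derivative^[n] p).eval (c * y + a) := by
  have hshift : iteratedDeriv n (fun x => p.eval (x + a)) =
      fun x => (derivative^[n] p).eval (x + a) := by
    rw [iteratedDeriv_comp_add_const n (fun x => p.eval x), iteratedDeriv_eval]
  rw [iteratedDeriv_comp_const_mul (f := fun x => p.eval (x + a))
    ((p.contDiff_eval n).comp (contDiff_id.add contDiff_const)), hshift]

theorem hasSum_taylorSeries (p : ℝ[X]) (x : ℝ) :
    HasSum (fun n => iteratedDeriv n (fun y => p.eval y) 0 / n ! * x ^ n) (p.eval x) := by
  simp_rw [iteratedDeriv_eval_zero_div_factorial]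
  rw [eval_eq_sum_range]
  refine hasSum_sum_of_ne_finset_zero fun n hn => ?_
  rw [coeff_eq_zero_of_natDegree_lt (by simpa [Nat.lt_succ_iff] using hn), zero_mul]

end Polynomial

theorem Real.hasSum_taylorSeries_cos (x : ℝ) :
    HasSum (fun n => iteratedDeriv n cos 0 / n ! * x ^ n) (cos x) := by
  have hodd : ∀ n ∉ range (2 * ·), iteratedDeriv n cos 0 / n ! * x ^ n = 0 := by
    intro n hn
    obtain ⟨k, rfl⟩ : Odd n :=
      Nat.not_even_iff_odd.1 fun ⟨k, hk⟩ => hn ⟨k, show 2 * k = n by omega⟩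
    simp
  rw [← (mul_right_injective₀ two_ne_zero).hasSum_iff hodd]
  convert hasSum_cos x using 2 with k
  simp [div_mul_eq_mul_div, pow_mul]

theorem iteratedDeriv_sub_const_mul_cos {f : ℝ → ℝ} {n : ℕ} (hf : ContDiff ℝ n f) (c x : ℝ) :
    iteratedDeriv n (fun y => f y - c * cos y) x =
      iteratedDeriv n f x - c * iteratedDeriv n cos x := by
  rw [← iteratedDeriv_const_mul_field]
  exact iteratedDeriv_sub hf.contDiffAt (contDiff_const.mul contDiff_cos).contDiffAt

theorem Polynomial.hasSum_taylorSeries_eval_sub_const_mul_cos (p : ℝ[X]) (c x : ℝ) :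
    HasSum (fun n => iteratedDeriv n (fun y => p.eval y - c * cos y) 0 / n ! * x ^ n)
      (p.eval x - c * cos x) := by
  simp_rw [iteratedDeriv_sub_const_mul_cos (p.contDiff_eval _), sub_div, sub_mul, mul_div_assoc,
    mul_assoc]
  exact (p.hasSum_taylorSeries x).sub ((hasSum_taylorSeries_cos x).mul_left c)

theorem abs_le_of_hasSum_of_abs_le_div_pow {a : ℕ → ℝ} {x v δ β : ℝ}
    (hv : HasSum (fun n => a n * x ^ n) v) (ha : ∀ n, |a n| ≤ δ / β ^ n) (hx : |x| < β) :
    |v| ≤ δ / (1 - |x| / β) := by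
  have hβ : 0 < β := (abs_nonneg x).trans_lt hx
  have hgeom : HasSum (fun n => δ * (|x| / β) ^ n) (δ / (1 - |x| / β)) :=
    (hasSum_geometric_of_lt_one (by positivity) ((div_lt_one hβ).2 hx)).mul_left δ
  have hterm (n : ℕ) : |a n * x ^ n| ≤ δ * (|x| / β) ^ n :=
    calc |a n * x ^ n| = |a n| * |x| ^ n := by rw [abs_mul, abs_pow]
      _ ≤ δ / β ^ n * |x| ^ n := by gcongr; exact ha n
      _ = δ * (|x| / β) ^ n := by rw [div_pow]; ring
  rw [abs_le]
  constructor
  · linarith [hasSum_le (fun n => (neg_le_abs _).trans (hterm n)) hv.neg hgeom]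
  · exact hasSum_le (fun n => (le_abs_self _).trans (hterm n)) hv hgeom

theorem hundredth_lt_cos_of_abs_le {y : ℝ} (hy : |y| ≤ 1.55) : 0.01 < cos y := by
  have hπ := pi_gt_d2
  have hsin := mul_le_sin (x := π / 2 - 1.55) (by linarith) (by linarith)
  rw [sin_pi_div_two_sub, show 2 / π * (π / 2 - 1.55) = 1 - 3.1 / π by field_simp; ring] at hsin
  have hmono : cos 1.55 ≤ cos y := by
    rw [← cos_abs y]
    exact cos_le_cos_of_nonneg_of_le_pi (abs_nonneg y) (by linarith) hy
  have : 3.1 / π < 0.99 := by rw [div_lt_iff₀ pi_pos]; linarith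
  linarith

theorem cos_lt_neg_hundredth_of_abs_eq {y : ℝ} (hy : |y| = 1.6) : cos y < -0.01 := by
  have hπ := pi_lt_d2
  have hπ' := pi_gt_three
  have hsin := mul_le_sin (x := 1.6 - π / 2) (by linarith) (by linarith)
  rw [← cos_abs, hy, show (1.6 : ℝ) = 1.6 - π / 2 + π / 2 by ring, cos_add_pi_div_two]
  rw [show 2 / π * (1.6 - π / 2) = 3.2 / π - 1 by field_simp; ring] at hsin
  have : 1.01 < 3.2 / π := by rw [lt_div_iff₀ pi_pos]; linarith
  linarith

theorem exists_first_zero_of_pos_of_neg {f : ℝ → ℝ} {a b c : ℝ} (hf : ContinuousOn f (Icc a c))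
    (hab : a ≤ b) (hbc : b < c) (hpos : ∀ x ∈ Icc a b, 0 < f x) (hneg : f c < 0) :
    ∃ z ∈ Ioo b c, f z = 0 ∧ ∀ x ∈ Ico a z, 0 < f x := by
  have hclosed : IsClosed (Icc a c ∩ f ⁻¹' Iic 0) :=
    hf.preimage_isClosed_of_isClosed isClosed_Icc isClosed_Iic
  obtain ⟨z, ⟨⟨haz, hzc⟩, hfz⟩, hleast⟩ :=
    (isCompact_Icc.of_isClosed_subset hclosed inter_subset_left).exists_isLeast
      ⟨c, ⟨hab.trans hbc.le, le_rfl⟩, hneg.le⟩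
  have hbefore : ∀ x ∈ Ico a z, 0 < f x := fun x ⟨hax, hxz⟩ => by
    by_contra! hfx
    exact (hleast ⟨⟨hax, hxz.le.trans hzc⟩, hfx⟩).not_gt hxz
  have hbz : b < z := by
    by_contra! hzb
    exact (hpos z ⟨haz, hzb⟩).not_ge hfz
  -- a sign change of `f` on `[a, z]` would produce an earlier zero
  have hfz0 : f z = 0 := by
    by_contra hne
    obtain ⟨w, hw, hfw⟩ := intermediate_value_Ioo' haz (hf.mono (Icc_subset_Icc_right hzc))
      ⟨lt_of_le_of_ne hfz hne, hpos a ⟨le_rfl, hab⟩⟩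
    exact (hbefore w ⟨hw.1.le, hw.2⟩).ne' hfw
  refine ⟨z, ⟨hbz, hzc.lt_of_ne ?_⟩, hfz0, hbefore⟩
  rintro rfl
  exact hneg.ne hfz0

theorem exists_zeros_around_of_pos_of_neg {f : ℝ → ℝ} (hf : Continuous f) {c r R : ℝ}
    (hr : 0 ≤ r) (hrR : r < R) (hpos : ∀ x ∈ Icc (c - r) (c + r), 0 < f x)
    (hleft : f (c - R) < 0) (hright : f (c + R) < 0) :
    ∃ ym yp, ym ∈ Ioo (c - R) (c - r) ∧ yp ∈ Ioo (c + r) (c + R) ∧ f ym = 0 ∧ f yp = 0 ∧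
      ∀ x ∈ Ioo ym yp, 0 < f x := by
  obtain ⟨yp, ⟨hyp, hyp'⟩, hfyp, hright_pos⟩ :=
    exists_first_zero_of_pos_of_neg hf.continuousOn (by linarith : c ≤ c + r) (by linarith)
      (fun x hx => hpos x ⟨by linarith [hx.1], hx.2⟩) hright
  obtain ⟨zm, ⟨hzm, hzm'⟩, hfzm, hleft_pos⟩ :=
    exists_first_zero_of_pos_of_neg (f := fun x => f (-x)) (c := -c + R)
      (hf.comp continuous_neg).continuousOn (by linarith : -c ≤ -c + r) (by linarith)
      (fun x hx => hpos (-x) ⟨by linarith [hx.2], by linarith [hx.1]⟩)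
      (by convert hleft using 2; ring)
  refine ⟨-zm, yp, ⟨by linarith, by linarith⟩, ⟨hyp, hyp'⟩, hfzm, hfyp, fun x hx => ?_⟩
  rcases le_total x c with hxc | hcx
  · simpa using hleft_pos (-x) ⟨by linarith, by linarith [hx.1]⟩
  · exact hright_pos x ⟨hcx, hx.2⟩

section Germ

variable {P : ℝ[X]} {s x₀ δ : ℝ}

theorem iteratedDeriv_eval_div_add_sub_two_cos_eq_zero (h0 : P.eval x₀ = 2)
    (h1 : (derivative P).eval x₀ = 0) (h2 : (derivative (derivative P)).eval x₀ = -(2 * s ^ 2))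
    (hs : s ≠ 0) {n : ℕ} (hn : n ≤ 2) :
    iteratedDeriv n (fun y => P.eval (y / s + x₀) - 2 * cos y) 0 = 0 := by
  simp_rw [div_eq_inv_mul]
  rw [iteratedDeriv_sub_const_mul_cos (f := fun y => P.eval (s⁻¹ * y + x₀))
    ((P.contDiff_eval n).comp ((contDiff_const.mul contDiff_id).add contDiff_const)),
    P.iteratedDeriv_eval_mul_add]
  interval_cases n
  · simp [h0]
  · simp [h1]
  · have hcos : iteratedDeriv 2 cos 0 = -1 := by simp
    rw [hcos, mul_zero, zero_add, Function.iterate_succ_apply, Function.iterate_one, h2]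
    field_simp
    ring

theorem abs_eval_div_add_sub_two_cos_le (h0 : P.eval x₀ = 2)
    (h1 : (derivative P).eval x₀ = 0) (h2 : (derivative (derivative P)).eval x₀ = -(2 * s ^ 2))
    (hs : s ≠ 0) (hb : ∀ n : ℕ, 3 ≤ n →
      |iteratedDeriv n (fun y => P.eval (y / s + x₀) - 2 * cos y) 0 / n !| ≤ δ / 2 ^ n)
    {y : ℝ} (hy : |y| < 2) :
    |P.eval (y / s + x₀) - 2 * cos y| ≤ δ / (1 - |y| / 2) := by
  have hδ : 0 ≤ δ := by linarith [(abs_nonneg _).trans (hb 3 le_rfl)]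
  have hcomp (y : ℝ) : (P.comp (C s⁻¹ * X + C x₀)).eval y = P.eval (y / s + x₀) := by
    simp [div_eq_inv_mul]
  refine abs_le_of_hasSum_of_abs_le_div_pow
    (a := fun n => iteratedDeriv n (fun y => P.eval (y / s + x₀) - 2 * cos y) 0 / n !) ?_
    (fun n => ?_) hy
  · have h := (P.comp (C s⁻¹ * X + C x₀)).hasSum_taylorSeries_eval_sub_const_mul_cos 2 y
    simp only [hcomp] at h
    exact h
  · rcases lt_or_ge n 3 with hn | hn
    · rw [iteratedDeriv_eval_div_add_sub_two_cos_eq_zero h0 h1 h2 hs (by omega)]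
      rw [zero_div, abs_zero]
      positivity
    · exact hb n hn

theorem exists_zeros_of_germ (h0 : P.eval x₀ = 2)
    (h1 : (derivative P).eval x₀ = 0) (h2 : (derivative (derivative P)).eval x₀ = -(2 * s ^ 2))
    (hs : 0 < s) (hδ : δ ≤ 0.0005) (hb : ∀ n : ℕ, 3 ≤ n →
      |iteratedDeriv n (fun y => P.eval (y / s + x₀) - 2 * cos y) 0 / n !| ≤ δ / 2 ^ n) :
    ∃ ym yp, ym ∈ Ioo (x₀ - 1.6 / s) (x₀ - 1.55 / s) ∧ yp ∈ Ioo (x₀ + 1.55 / s) (x₀ + 1.6 / s) ∧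
      P.eval ym = 0 ∧ P.eval yp = 0 ∧ ∀ x ∈ Ioo ym yp, 0 < P.eval x := by
  have hclose (x : ℝ) (hx : |s * (x - x₀)| ≤ 1.6) :
      |P.eval x - 2 * cos (s * (x - x₀))| ≤ 0.0025 := by
    have h := abs_eval_div_add_sub_two_cos_le h0 h1 h2 hs.ne' hb (y := s * (x - x₀)) (by linarith)
    rw [mul_div_cancel_left₀ _ hs.ne', sub_add_cancel] at h
    refine h.trans ?_
    rw [div_le_iff₀ (by linarith)]
    linarith
  have hpos (x : ℝ) (hx : x ∈ Icc (x₀ - 1.55 / s) (x₀ + 1.55 / s)) : 0 < P.eval x := by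
    have hx' : |s * (x - x₀)| ≤ 1.55 := by
      rw [abs_le, ← le_div_iff₀' hs, ← div_le_iff₀' hs, neg_div]
      constructor <;> linarith [hx.1, hx.2]
    have hcos := hundredth_lt_cos_of_abs_le hx'
    linarith [(abs_le.1 (hclose x (by linarith))).1]
  have hneg (x : ℝ) (hx : |s * (x - x₀)| = 1.6) : P.eval x < 0 := by
    have hcos := cos_lt_neg_hundredth_of_abs_eq hx
    linarith [(abs_le.1 (hclose x hx.le)).2]
  refine exists_zeros_around_of_pos_of_neg P.continuous (by positivity)
    (div_lt_div_of_pos_right (by norm_num) hs) hpos (hneg _ ?_) (hneg _ ?_)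
  · rw [show s * (x₀ - 1.6 / s - x₀) = -1.6 by field_simp; ring]
    norm_num
  · rw [show s * (x₀ + 1.6 / s - x₀) = 1.6 by field_simp; ring]
    norm_num

end Germ

theorem tmCoeff_zero (Pm1 P0 : ℝ[X]) (x₀ ρ : ℝ) (n : ℕ) :
    tmCoeff Pm1 P0 x₀ ρ 0 n =
      iteratedDeriv n (fun y => Pm1.eval (y / (ρ / 2) + x₀) - 2 * cos y) 0 / n ! := by
  unfold tmCoeff tmDelta
  rw [show (2 : ℝ) ^ (((0 : ℕ) : ℤ) - 1) * ρ = ρ / 2 by norm_num; ring]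
  rfl

theorem tmCoeff_one (Pm1 P0 : ℝ[X]) (x₀ ρ : ℝ) (n : ℕ) :
    tmCoeff Pm1 P0 x₀ ρ 1 n =
      iteratedDeriv n (fun y => P0.eval (y / ρ + x₀) - 2 * cos y) 0 / n ! := by
  unfold tmCoeff tmDelta
  rw [show (2 : ℝ) ^ (((1 : ℕ) : ℤ) - 1) * ρ = ρ by norm_num]
  rfl

theorem regular_germ_zero_ratios_general (δ : ℝ) (hδ : δ ≤ 0.0005)
    (Pm1 P0 : Polynomial ℝ) (x₀ ρ : ℝ)
    (hreg : IsRegularGermAt Pm1 P0 δ 2 ρ x₀) :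
    ∃ ym1 ym0 yp0 yp1 : ℝ,
      ym1 < ym0 ∧ ym0 < x₀ ∧ x₀ < yp0 ∧ yp0 < yp1 ∧
      Pm1.eval ym1 = 0 ∧ Pm1.eval yp1 = 0 ∧
      P0.eval ym0 = 0 ∧ P0.eval yp0 = 0 ∧
      (∀ x, x ∈ Set.Ioc ym1 x₀ ∪ Set.Ico x₀ yp1 → 0 < Pm1.eval x) ∧
      (∀ x, x ∈ Set.Ioc ym0 x₀ ∪ Set.Ico x₀ yp0 → 0 < P0.eval x) ∧
      (yp1 - x₀) / (yp0 - x₀) ≤ 2.1 ∧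
      (x₀ - ym1) / (x₀ - ym0) ≤ 2.1 := by
  obtain ⟨⟨hρ, e0, e1, e2, f0, f1, f2⟩, hcoeff⟩ := hreg
  obtain ⟨ym1, yp1, ⟨hym1, hym1'⟩, ⟨hyp1, hyp1'⟩, hPm1m, hPm1p, hPm1pos⟩ :=
    exists_zeros_of_germ e0 e1 (by rw [e2]; ring) (half_pos hρ) hδ
      fun n hn => tmCoeff_zero Pm1 P0 x₀ ρ n ▸ (hcoeff n hn).1
  obtain ⟨ym0, yp0, ⟨hym0, hym0'⟩, ⟨hyp0, hyp0'⟩, hP0m, hP0p, hP0pos⟩ :=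
    exists_zeros_of_germ f0 f1 f2 hρ hδ fun n hn => tmCoeff_one Pm1 P0 x₀ ρ n ▸ (hcoeff n hn).2
  simp only [div_eq_mul_inv, mul_inv, inv_inv] at hym1 hym1' hyp1 hyp1' hym0 hym0' hyp0 hyp0'
  have hρinv := inv_pos.2 hρ
  refine ⟨ym1, ym0, yp0, yp1, by linarith, by linarith, by linarith, by linarith,
    hPm1m, hPm1p, hP0m, hP0p, ?_, ?_, ?_, ?_⟩
  · rw [Ioc_union_Ico_eq_Ioo (by linarith) (by linarith)]
    exact hPm1pos
  · rw [Ioc_union_Ico_eq_Ioo (by linarith) (by linarith)]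
    exact hP0pos
  · rw [div_le_iff₀ (by linarith)]
    linarith
  · rw [div_le_iff₀ (by linarith)]
    linarith

/-- zeros of `P_{-1}` and `P₀` surrounding the base point of a
`(δ, 2)`-regular germ, positivity in between, and interval length ratios. -/
theorem regular_germ_zero_ratios (δ : ℝ) (hδ0 : 0 < δ) (hδ : δ ≤ 0.0005)
    (Pm1 P0 : Polynomial ℝ) (x₀ ρ : ℝ)
    (hreg : IsRegularGermAt Pm1 P0 δ 2 ρ x₀) :
    ∃ ym1 ym0 yp0 yp1 : ℝ,
      ym1 < ym0 ∧ ym0 < x₀ ∧ x₀ < yp0 ∧ yp0 < yp1 ∧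
      Pm1.eval ym1 = 0 ∧ Pm1.eval yp1 = 0 ∧
      P0.eval ym0 = 0 ∧ P0.eval yp0 = 0 ∧
      (∀ x, x ∈ Set.Ioc ym1 x₀ ∪ Set.Ico x₀ yp1 → 0 < Pm1.eval x) ∧
      (∀ x, x ∈ Set.Ioc ym0 x₀ ∪ Set.Ico x₀ yp0 → 0 < P0.eval x) ∧
      (yp1 - x₀) / (yp0 - x₀) ≤ 2.1 ∧
      (x₀ - ym1) / (x₀ - ym0) ≤ 2.1 :=
  regular_germ_zero_ratios_general δ hδ Pm1 P0 x₀ ρ hreg
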